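/- arXiv:2412.16776 — 4 statements merged into one kernel-verified Lean document; each statement's English description precedes it below -/
import Mathlib

section
/- Fix x > 0 and let L = {m·(x, 0) + n·(x/2, (√3/2)·x) : m, n ∈ ℤ} ⊂ ℝ² be the equilateral triangular lattice of edge length x. Let F = {(0,0), (x,0)}, whose minimum bounding ball has center c = (x/2, 0) and radius x/2. Then the minimum of ‖p − c‖ over p ∈ L \ F equals (√3/2)·x, so the signed distance min_{p ∈ L \ F} ‖p − c‖ − x/2 equals ((√3 − 1)/2)·x, which is strictly positive; in particular F satisfies the Minimum-Ball condition with respect to L. -/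
/-!
Writing a lattice point as `m • v₁ + n • v₂`, its squared distance to the midpoint
`c = (x/2, 0)` of the edge `F` is `(x/2)² ((2m + n - 1)² + 3n²)`. The integer form
`(2m + n - 1)² + 3n²` is `1` at the two endpoints `(m, n) = (0, 0), (1, 0)` and at least `3`
elsewhere (either `n ≠ 0`, or `n = 0` and `|2m - 1| ≥ 3`), with the value `3` attained at
`v₂`. Since `√3 > 1`, every lattice point outside `F` lies strictly outside the ball.
-/

noncomputable def pt2 (a b : ℝ) : EuclideanSpace ℝ (Fin 2) :=
  (WithLp.equiv 2 (Fin 2 → ℝ)).symm ![a, b]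

lemma smul_pt2_add_smul_pt2 (r s a b c d : ℝ) :
    r • pt2 a b + s • pt2 c d = pt2 (r * a + s * c) (r * b + s * d) := by
  ext i
  fin_cases i <;> simp [pt2]

lemma dist_pt2 (a b c d : ℝ) :
    dist (pt2 a b) (pt2 c d) = √((a - c) ^ 2 + (b - d) ^ 2) := by
  simp [EuclideanSpace.dist_eq, pt2, Fin.sum_univ_two, Real.dist_eq, sq_abs]

lemma one_lt_sqrt_three : 1 < √3 := by
  rw [Real.lt_sqrt zero_le_one]
  norm_num

lemma dist_triangular_lattice_point_edge_midpoint (x : ℝ) (m n : ℤ) :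
    dist ((m : ℝ) • pt2 x 0 + (n : ℝ) • pt2 (x / 2) (√3 / 2 * x)) (pt2 (x / 2) 0) =
      √((2 * m + n - 1) ^ 2 + 3 * n ^ 2) / 2 * |x| := by
  have h3 : √3 ^ 2 = 3 := Real.sq_sqrt (by norm_num)
  rw [smul_pt2_add_smul_pt2, dist_pt2,
    show ((m : ℝ) * x + n * (x / 2) - x / 2) ^ 2 + ((m : ℝ) * 0 + n * (√3 / 2 * x) - 0) ^ 2 =
      ((2 * m + n - 1) ^ 2 + 3 * n ^ 2) * (x / 2) ^ 2 by linear_combination (n * x / 2) ^ 2 * h3,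
    Real.sqrt_mul' _ (sq_nonneg _), Real.sqrt_sq_eq_abs, abs_div, abs_two]
  ring

lemma three_le_sq_add_three_mul_sq {m n : ℤ} (h₀ : (m, n) ≠ (0, 0)) (h₁ : (m, n) ≠ (1, 0)) :
    3 ≤ (2 * m + n - 1) ^ 2 + 3 * n ^ 2 := by
  rcases eq_or_ne n 0 with rfl | hn
  · have hm : m ≤ -1 ∨ 2 ≤ m := by
      simp only [ne_eq, Prod.mk.injEq, and_true] at h₀ h₁
      omega
    rcases hm with hm | hm <;> nlinarith
  · have : 1 ≤ n ^ 2 := by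
      rw [one_le_sq_iff_one_le_abs]
      exact Int.one_le_abs hn
    nlinarith [sq_nonneg (2 * m + n - 1)]

/-- In the equilateral triangular lattice `L` of edge length `x > 0`,
the face `F = {(0,0), (x,0)}` has minimum bounding ball of center `c = (x/2, 0)` and
radius `x/2`; the minimum of `‖p − c‖` over `p ∈ L \ F` equals `(√3/2)·x`, hence the
signed distance equals `((√3 − 1)/2)·x > 0`, and in particular `F` satisfies the
Minimum-Ball condition with respect to `L`. -/
theorem triangular_lattice_minimum_ball (x : ℝ) (hx : 0 < x) :
    let v₁ : EuclideanSpace ℝ (Fin 2) := pt2 x 0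
    let v₂ : EuclideanSpace ℝ (Fin 2) := pt2 (x / 2) (Real.sqrt 3 / 2 * x)
    let L : Set (EuclideanSpace ℝ (Fin 2)) :=
      {q | ∃ m n : ℤ, q = (m : ℝ) • v₁ + (n : ℝ) • v₂}
    let F : Set (EuclideanSpace ℝ (Fin 2)) := {pt2 0 0, pt2 x 0}
    let c : EuclideanSpace ℝ (Fin 2) := pt2 (x / 2) 0
    -- `c` is the center of the minimum bounding ball of `F`, of radius `x/2`
    (∀ p ∈ F, dist p c = x / 2) ∧
    -- the minimum of `‖p − c‖` over `p ∈ L \ F` equals `(√3/2)·x`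
    IsLeast ((fun p => dist p c) '' (L \ F)) (Real.sqrt 3 / 2 * x) ∧
    -- the signed distance equals `((√3 − 1)/2)·x`, which is strictly positive
    Real.sqrt 3 / 2 * x - x / 2 = (Real.sqrt 3 - 1) / 2 * x ∧
    0 < (Real.sqrt 3 - 1) / 2 * x ∧
    -- Minimum-Ball condition: no point of `L \ F` lies strictly inside the ball
    ∀ p ∈ L \ F, ¬ dist p c < x / 2 := by
  intro v₁ v₂ L F c
  have hdist (m n : ℤ) := dist_triangular_lattice_point_edge_midpoint x m n
  rw [abs_of_pos hx] at hdist
  have hF : ∀ p ∈ F, dist p c = x / 2 := by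
    rintro p (rfl | rfl) <;> rw [dist_pt2, Real.sqrt_eq_iff_mul_self_eq_of_pos (by positivity)] <;>
      ring
  have hv₂ : dist v₂ c = √3 / 2 * x := by
    simpa using hdist 0 1
  have hv₂L : v₂ ∈ L \ F := by
    refine ⟨⟨0, 1, by simp⟩, fun hv₂F => ?_⟩
    have := (hF v₂ hv₂F).symm.trans hv₂
    nlinarith [one_lt_sqrt_three]
  have hlower : ∀ p ∈ L \ F, √3 / 2 * x ≤ dist p c := by
    rintro p ⟨⟨m, n, rfl⟩, hpF⟩
    have h₀ : (m, n) ≠ (0, 0) := by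
      rintro ⟨⟩
      exact hpF (Or.inl (by rw [smul_pt2_add_smul_pt2]; norm_num))
    have h₁ : (m, n) ≠ (1, 0) := by
      rintro ⟨⟩
      exact hpF (Or.inr (by rw [smul_pt2_add_smul_pt2]; norm_num))
    have hk := three_le_sq_add_three_mul_sq h₀ h₁
    rw [hdist]
    gcongr
    exact_mod_cast hk
  have hpos : 0 < (√3 - 1) / 2 * x := by nlinarith [one_lt_sqrt_three]
  exact ⟨hF, ⟨⟨v₂, hv₂L, hv₂⟩, Set.forall_mem_image.2 hlower⟩, by ring, hpos,
    fun p hp => by linarith [hlower p hp]⟩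
end

section
/- Let a, b, c, d ∈ ℝ² with a ≠ b, c ≠ d, and {a, b} ∩ {c, d} = ∅. Suppose that c and d both lie strictly outside the minimum bounding ball of {a, b} (i.e., ‖c − (a+b)/2‖ > ‖a − b‖/2 and ‖d − (a+b)/2‖ > ‖a − b‖/2), and that a and b both lie strictly outside the minimum bounding ball of {c, d} (i.e., ‖a − (c+d)/2‖ > ‖c − d‖/2 and ‖b − (c+d)/2‖ > ‖c − d‖/2). Then the closed segments [a, b] and [c, d] are disjoint. -/
/-!
Write `f_{pq}(x) = ⟪x - p, x - q⟫`; it is negative exactly inside the open ball with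
diameter `[p, q]`. Along a segment `x = s • c + (1 - s) • d`, the function `f_{pq}` is the
affine interpolation of its endpoint values minus `s (1 - s) ‖c - d‖²`. Hence at a point `x`
of `[c, d]` we get `f_{cd}(x) = -s (1 - s) ‖c - d‖² < f_{ab}(x)` as soon as `c` and `d` lie
outside the ball of `[a, b]`. A common point of both segments would give this inequality in
both directions.
-/

open RealInnerProductSpace

section InnerProductSpace

variable {E : Type*} [NormedAddCommGroup E] [InnerProductSpace ℝ E]

theorem inner_sub_sub_eq_dist_midpoint_sq_sub (p u v : E) :
    ⟪p - u, p - v⟫ = dist p (midpoint ℝ u v) ^ 2 - (dist u v / 2) ^ 2 := by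
  rw [dist_eq_norm, dist_eq_norm, midpoint_eq_smul_add, div_pow, invOf_eq_inv]
  simp only [← real_inner_self_eq_norm_sq, inner_sub_left, inner_sub_right,
    inner_add_left, inner_add_right, real_inner_smul_left, real_inner_smul_right]
  rw [real_inner_comm v u, real_inner_comm p u, real_inner_comm p v]
  ring

theorem inner_sub_sub_pos_iff (p u v : E) :
    0 < ⟪p - u, p - v⟫ ↔ dist u v / 2 < dist p (midpoint ℝ u v) := by
  rw [inner_sub_sub_eq_dist_midpoint_sq_sub, sub_pos]
  exact pow_lt_pow_iff_left₀ (by positivity) dist_nonneg two_ne_zero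

theorem inner_add_smul_sub_sub (u v p q : E) {s t : ℝ} (hst : s + t = 1) :
    ⟪s • u + t • v - p, s • u + t • v - q⟫ =
      s * ⟪u - p, u - q⟫ + t * ⟪v - p, v - q⟫ - s * t * ‖u - v‖ ^ 2 := by
  obtain rfl : t = 1 - s := by linarith
  simp only [← real_inner_self_eq_norm_sq, inner_sub_left, inner_sub_right,
    inner_add_left, inner_add_right, real_inner_smul_left, real_inner_smul_right]
  ring

theorem inner_sub_sub_lt_of_mem_segment {a b c d x : E} (hx : x ∈ segment ℝ c d)
    (hc : 0 < ⟪c - a, c - b⟫) (hd : 0 < ⟪d - a, d - b⟫) :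
    ⟪x - c, x - d⟫ < ⟪x - a, x - b⟫ := by
  obtain ⟨s, t, hs, ht, hst, rfl⟩ := hx
  rw [inner_add_smul_sub_sub c d c d hst, inner_add_smul_sub_sub c d a b hst]
  simp only [sub_self, inner_zero_left, inner_zero_right, mul_zero, add_zero,
    sub_lt_sub_iff_right]
  rcases hs.lt_or_eq with hs | rfl
  · exact add_pos_of_pos_of_nonneg (mul_pos hs hc) (mul_nonneg ht hd.le)
  · obtain rfl : t = 1 := by linarith
    linarith

end InnerProductSpace

theorem minimum_ball_segments_disjoint_general (a b c d : EuclideanSpace ℝ (Fin 2))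
    (h1 : dist a b / 2 < dist c (midpoint ℝ a b))
    (h2 : dist a b / 2 < dist d (midpoint ℝ a b))
    (h3 : dist c d / 2 < dist a (midpoint ℝ c d))
    (h4 : dist c d / 2 < dist b (midpoint ℝ c d)) :
    segment ℝ a b ∩ segment ℝ c d = ∅ := by
  rw [Set.eq_empty_iff_forall_notMem]
  rintro x ⟨hxab, hxcd⟩
  exact lt_asymm
    (inner_sub_sub_lt_of_mem_segment hxcd ((inner_sub_sub_pos_iff c a b).2 h1)
      ((inner_sub_sub_pos_iff d a b).2 h2))
    (inner_sub_sub_lt_of_mem_segment hxab ((inner_sub_sub_pos_iff a c d).2 h3)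
      ((inner_sub_sub_pos_iff b c d).2 h4))

/-- Let `a, b, c, d ∈ ℝ²` with `a ≠ b`, `c ≠ d` and
`{a, b} ∩ {c, d} = ∅`. If `c` and `d` lie strictly outside the minimum bounding ball
of `{a, b}` and `a` and `b` lie strictly outside the minimum bounding ball of `{c, d}`,
then the closed segments `[a, b]` and `[c, d]` are disjoint. -/
theorem minimum_ball_segments_disjoint (a b c d : EuclideanSpace ℝ (Fin 2))
    (hab : a ≠ b) (hcd : c ≠ d)
    (hsep : ({a, b} : Set (EuclideanSpace ℝ (Fin 2))) ∩ {c, d} = ∅)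
    (h1 : dist a b / 2 < dist c (midpoint ℝ a b))
    (h2 : dist a b / 2 < dist d (midpoint ℝ a b))
    (h3 : dist c d / 2 < dist a (midpoint ℝ c d))
    (h4 : dist c d / 2 < dist b (midpoint ℝ c d)) :
    segment ℝ a b ∩ segment ℝ c d = ∅ :=
  minimum_ball_segments_disjoint_general a b c d h1 h2 h3 h4
end

section
/- Let A, B, C ∈ ℝ² be affinely independent and suppose the triangle ABC is non-obtuse (each of the angles ∠(B,A,C), ∠(A,B,C), ∠(A,C,B) is at most π/2). Let D = (A+B)/2, E = (A+C)/2, F = (B+C)/2 be the edge midpoints, and consider the four sub-triangles ADE, BDF, CEF, and DEF. Then for each of these four sub-triangles T, no point of {A, B, C, D, E, F} other than the three vertices of T lies strictly inside the closed circumscribed disk of T (the closed disk centered at the circumcenter of T with radius the circumradius of T). -/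
/-!
Let `N` be the centre and `ρ` the radius of a circle through the vertices of one of the four
sub-triangles. A point `b` that is the reflection of a vertex `a` through another vertex `m`
lies outside the circle, since Apollonius gives `|Nb|² = 2|Nm|² + |ab|²/2 - |Na|² ≥ ρ²`. Every
other point completes a parallelogram `a d f e` on a vertex `a` of the sub-triangle whose angle
is an angle of `ABC`, hence non-obtuse. Apollonius on both diagonals gives
`|Nf|² = ρ² + (|af|² - |de|²)/2`, and the diagonal `af` through the non-obtuse vertex is the
longer one.
-/

open EuclideanGeometry Real

section Midpoint

variable {R V P : Type*} [CommRing R] [Invertible (2 : R)] [AddCommGroup V] [Module R V]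
  [AddTorsor V P]

theorem midpoint_midpoint_left_right (a b c : P) :
    midpoint R (midpoint R a b) (midpoint R a c) = midpoint R a (midpoint R b c) :=
  ((AffineMap.homothety a (⅟2 : R)).map_midpoint b c).symm

end Midpoint

section Euclidean

variable {V P : Type*} [NormedAddCommGroup V] [InnerProductSpace ℝ V] [MetricSpace P]
  [NormedAddTorsor V P]

theorem dist_midpoint_midpoint_same_left (p q r : P) :
    dist (midpoint ℝ p q) (midpoint ℝ p r) = dist q r / 2 := by
  rw [dist_eq_norm_vsub V, dist_eq_norm_vsub V, midpoint_vsub_midpoint_same_left, norm_smul]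
  norm_num
  ring

theorem dist_midpoint_midpoint_same_right (p q r : P) :
    dist (midpoint ℝ q p) (midpoint ℝ r p) = dist q r / 2 := by
  rw [midpoint_comm q, midpoint_comm r, dist_midpoint_midpoint_same_left]

theorem dist_sq_le_of_angle_le_pi_div_two {a b c : P} (h : ∠ b a c ≤ π / 2) :
    dist b c ^ 2 ≤ dist a b ^ 2 + dist a c ^ 2 := by
  have hcos : 0 ≤ cos (∠ b a c) :=
    cos_nonneg_of_neg_pi_div_two_le_of_le (by linarith [angle_nonneg b a c, pi_pos]) h
  rw [sq, sq, sq, law_cos b a c, dist_comm b a, dist_comm c a]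
  linarith [mul_nonneg (mul_nonneg (dist_nonneg (x := a) (y := b)) (dist_nonneg (x := a) (y := c)))
    hcos]

theorem dist_midpoint_le_dist_of_dist_le {a b p : P} (h : dist a p ≤ dist (midpoint ℝ a b) p) :
    dist (midpoint ℝ a b) p ≤ dist b p := by
  have := dist_sq_add_dist_sq_eq_two_mul_dist_midpoint_sq_add_half_dist_sq p a b
  rw [dist_comm p, dist_comm p, dist_comm p] at this
  nlinarith [dist_nonneg (x := a) (y := p), dist_nonneg (x := b) (y := p), sq_nonneg (dist a b)]

theorem le_dist_of_midpoint_eq_midpoint {a d e f p : P} {ρ : ℝ}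
    (hm : midpoint ℝ d e = midpoint ℝ a f) (hde : dist d e ^ 2 ≤ dist a d ^ 2 + dist a e ^ 2)
    (ha : dist a p = ρ) (hd : dist d p = ρ) (he : dist e p = ρ) : ρ ≤ dist f p := by
  have hρ : 0 ≤ ρ := ha ▸ dist_nonneg
  have haf := dist_sq_add_dist_sq_eq_two_mul_dist_midpoint_sq_add_half_dist_sq p a f
  have hde' := dist_sq_add_dist_sq_eq_two_mul_dist_midpoint_sq_add_half_dist_sq p d e
  have hade := dist_sq_add_dist_sq_eq_two_mul_dist_midpoint_sq_add_half_dist_sq a d e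
  have ham : dist a (midpoint ℝ a f) = dist a f / 2 := by
    rw [dist_left_midpoint]
    norm_num
    ring
  rw [hm, ham] at hade
  rw [hm, dist_comm p, dist_comm p, hd, he] at hde'
  rw [dist_comm p, dist_comm p, ha] at haf
  nlinarith [dist_nonneg (x := f) (y := p)]

theorem le_dist_of_corner_triangle {A B C p : P} {ρ : ℝ} (hA : ∠ B A C ≤ π / 2)
    (hpA : dist A p = ρ) (hpAB : dist (midpoint ℝ A B) p = ρ)
    (hpAC : dist (midpoint ℝ A C) p = ρ) :
    ρ ≤ dist B p ∧ ρ ≤ dist C p ∧ ρ ≤ dist (midpoint ℝ B C) p := by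
  refine ⟨hpAB ▸ dist_midpoint_le_dist_of_dist_le (hpA.trans hpAB.symm).le,
    hpAC ▸ dist_midpoint_le_dist_of_dist_le (hpA.trans hpAC.symm).le,
    le_dist_of_midpoint_eq_midpoint (midpoint_midpoint_left_right A B C) ?_ hpA hpAB hpAC⟩
  have := dist_sq_le_of_angle_le_pi_div_two hA
  rw [dist_midpoint_midpoint_same_left, dist_left_midpoint, dist_left_midpoint]
  norm_num
  linarith

theorem le_dist_of_medial_triangle {A B C p : P} {ρ : ℝ} (hA : ∠ B A C ≤ π / 2)
    (hpAB : dist (midpoint ℝ A B) p = ρ) (hpAC : dist (midpoint ℝ A C) p = ρ)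
    (hpBC : dist (midpoint ℝ B C) p = ρ) : ρ ≤ dist A p := by
  refine le_dist_of_midpoint_eq_midpoint
    ((midpoint_midpoint_left_right A B C).trans (midpoint_comm _ _)) ?_ hpBC hpAB hpAC
  have := dist_sq_le_of_angle_le_pi_div_two hA
  rw [dist_midpoint_midpoint_same_left, midpoint_comm A B, dist_midpoint_midpoint_same_left,
    dist_midpoint_midpoint_same_right, dist_comm C A, dist_comm B A]
  linarith

end Euclidean

theorem midpoint_subdivision_minimum_ball_general (A B C : EuclideanSpace ℝ (Fin 2))
    (h₁ : EuclideanGeometry.angle B A C ≤ Real.pi / 2)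
    (h₂ : EuclideanGeometry.angle A B C ≤ Real.pi / 2)
    (h₃ : EuclideanGeometry.angle A C B ≤ Real.pi / 2) :
    let D := midpoint ℝ A B
    let E := midpoint ℝ A C
    let F := midpoint ℝ B C
    let pts : Set (EuclideanSpace ℝ (Fin 2)) := {A, B, C, D, E, F}
    (∀ (N : EuclideanSpace ℝ (Fin 2)) (ρ : ℝ),
        dist A N = ρ → dist D N = ρ → dist E N = ρ →
        ∀ q ∈ pts, q ∉ ({A, D, E} : Set (EuclideanSpace ℝ (Fin 2))) → ¬ dist q N < ρ) ∧
    (∀ (N : EuclideanSpace ℝ (Fin 2)) (ρ : ℝ),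
        dist B N = ρ → dist D N = ρ → dist F N = ρ →
        ∀ q ∈ pts, q ∉ ({B, D, F} : Set (EuclideanSpace ℝ (Fin 2))) → ¬ dist q N < ρ) ∧
    (∀ (N : EuclideanSpace ℝ (Fin 2)) (ρ : ℝ),
        dist C N = ρ → dist E N = ρ → dist F N = ρ →
        ∀ q ∈ pts, q ∉ ({C, E, F} : Set (EuclideanSpace ℝ (Fin 2))) → ¬ dist q N < ρ) ∧
    (∀ (N : EuclideanSpace ℝ (Fin 2)) (ρ : ℝ),
        dist D N = ρ → dist E N = ρ → dist F N = ρ →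
        ∀ q ∈ pts, q ∉ ({D, E, F} : Set (EuclideanSpace ℝ (Fin 2))) → ¬ dist q N < ρ) := by
  intro D E F pts
  refine ⟨?_, ?_, ?_, ?_⟩ <;> intro N ρ hN₁ hN₂ hN₃ q hq hq' <;>
    simp only [pts, Set.mem_insert_iff, Set.mem_singleton_iff] at hq hq'
  · obtain ⟨hB, hC, hF⟩ := le_dist_of_corner_triangle h₁ hN₁ hN₂ hN₃
    rcases hq with rfl | rfl | rfl | rfl | rfl | rfl <;> first | exact not_lt.2 ‹_› | simp at hq'
  · obtain ⟨hA, hC, hE⟩ :=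
      le_dist_of_corner_triangle h₂ hN₁ (midpoint_comm (R := ℝ) A B ▸ hN₂) hN₃
    rcases hq with rfl | rfl | rfl | rfl | rfl | rfl <;> first | exact not_lt.2 ‹_› | simp at hq'
  · obtain ⟨hA, hB, hD⟩ := le_dist_of_corner_triangle h₃ hN₁
      (midpoint_comm (R := ℝ) A C ▸ hN₂) (midpoint_comm (R := ℝ) B C ▸ hN₃)
    rcases hq with rfl | rfl | rfl | rfl | rfl | rfl <;> first | exact not_lt.2 ‹_› | simp at hq'
  · have hA := le_dist_of_medial_triangle h₁ hN₁ hN₂ hN₃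
    have hB := le_dist_of_medial_triangle h₂ (midpoint_comm (R := ℝ) A B ▸ hN₁) hN₃ hN₂
    have hC := le_dist_of_medial_triangle h₃ (midpoint_comm (R := ℝ) A C ▸ hN₂)
      (midpoint_comm (R := ℝ) B C ▸ hN₃) hN₁
    rcases hq with rfl | rfl | rfl | rfl | rfl | rfl <;> first | exact not_lt.2 ‹_› | simp at hq'

/-- Let `A, B, C ∈ ℝ²` be affinely independent and suppose the
triangle `ABC` is non-obtuse. Let `D, E, F` be the edge midpoints of `AB`, `AC`, `BC`.
Then for each of the four sub-triangles `ADE`, `BDF`, `CEF`, `DEF`, no point of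
`{A, B, C, D, E, F}` other than its three vertices lies strictly inside its closed
circumscribed disk (the disk centered at its circumcenter, the unique point equidistant
from its three vertices, with radius the circumradius). -/
theorem midpoint_subdivision_minimum_ball (A B C : EuclideanSpace ℝ (Fin 2))
    (hai : AffineIndependent ℝ ![A, B, C])
    (h₁ : EuclideanGeometry.angle B A C ≤ Real.pi / 2)
    (h₂ : EuclideanGeometry.angle A B C ≤ Real.pi / 2)
    (h₃ : EuclideanGeometry.angle A C B ≤ Real.pi / 2) :
    let D := midpoint ℝ A B
    let E := midpoint ℝ A C
    let F := midpoint ℝ B C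
    let pts : Set (EuclideanSpace ℝ (Fin 2)) := {A, B, C, D, E, F}
    (∀ (N : EuclideanSpace ℝ (Fin 2)) (ρ : ℝ),
        dist A N = ρ → dist D N = ρ → dist E N = ρ →
        ∀ q ∈ pts, q ∉ ({A, D, E} : Set (EuclideanSpace ℝ (Fin 2))) → ¬ dist q N < ρ) ∧
    (∀ (N : EuclideanSpace ℝ (Fin 2)) (ρ : ℝ),
        dist B N = ρ → dist D N = ρ → dist F N = ρ →
        ∀ q ∈ pts, q ∉ ({B, D, F} : Set (EuclideanSpace ℝ (Fin 2))) → ¬ dist q N < ρ) ∧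
    (∀ (N : EuclideanSpace ℝ (Fin 2)) (ρ : ℝ),
        dist C N = ρ → dist E N = ρ → dist F N = ρ →
        ∀ q ∈ pts, q ∉ ({C, E, F} : Set (EuclideanSpace ℝ (Fin 2))) → ¬ dist q N < ρ) ∧
    (∀ (N : EuclideanSpace ℝ (Fin 2)) (ρ : ℝ),
        dist D N = ρ → dist E N = ρ → dist F N = ρ →
        ∀ q ∈ pts, q ∉ ({D, E, F} : Set (EuclideanSpace ℝ (Fin 2))) → ¬ dist q N < ρ) :=
  midpoint_subdivision_minimum_ball_general A B C h₁ h₂ h₃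
end

section
/- Let A, B, C ∈ ℝ² be affinely independent, let D = (A+B)/2, E = (A+C)/2, F = (B+C)/2 be the edge midpoints, and let N and ρ be the circumcenter and circumradius of the medial triangle DEF. Then ‖A − N‖² − ρ² = (‖B − A‖·‖C − A‖·cos ∠(B,A,C)) / 2. Consequently, the vertex A lies strictly inside the closed circumscribed disk of the medial triangle DEF if and only if the angle ∠(B,A,C) is obtuse (strictly greater than π/2). -/
/-!
Apollonius's theorem, applied from `N` to each side of the triangle, expresses `ND²`, `NE²`,
`NF²` through the squared distances from `N` to the vertices and the squared side lengths.
In the alternating sum `NA² - ND² - NE² + NF²` every distance from `N` cancels, leaving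
`(AB² + AC² - BC²) / 4 = AB · AC · cos A / 2` by the law of cosines. When `ND = NE = NF = ρ`
this sum is the power `NA² - ρ²` of `A`, so its sign is that of `cos A`.
-/

open Real

namespace EuclideanGeometry

variable {V P : Type*} [NormedAddCommGroup V] [InnerProductSpace ℝ V] [MetricSpace P]
  [NormedAddTorsor V P]

theorem cos_angle_neg_iff {p₁ p₂ p₃ : P} : cos (∠ p₁ p₂ p₃) < 0 ↔ π / 2 < ∠ p₁ p₂ p₃ := by
  constructor
  · intro hcos
    by_contra! hle
    exact hcos.not_ge (cos_nonneg_of_mem_Icc ⟨by linarith [pi_pos, angle_nonneg p₁ p₂ p₃], hle⟩)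
  · intro hlt
    exact cos_neg_of_pi_div_two_lt_of_lt hlt (by linarith [pi_pos, angle_le_pi p₁ p₂ p₃])

theorem dist_mul_dist_mul_cos_angle_neg_iff (p₁ p₂ p₃ : P) :
    dist p₁ p₂ * dist p₃ p₂ * cos (∠ p₁ p₂ p₃) < 0 ↔ π / 2 < ∠ p₁ p₂ p₃ := by
  rcases eq_or_ne p₁ p₂ with rfl | h₁
  · simp [angle_self_left]
  rcases eq_or_ne p₃ p₂ with rfl | h₃
  · simp [angle_self_right]
  have hpos : 0 < dist p₁ p₂ * dist p₃ p₂ := mul_pos (dist_pos.2 h₁) (dist_pos.2 h₃)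
  rw [← cos_angle_neg_iff]
  exact ⟨fun h => (pos_iff_neg_of_mul_neg h).1 hpos, mul_neg_of_pos_of_neg hpos⟩

theorem dist_sq_sub_dist_midpoint_sq_sub_dist_midpoint_sq_add_dist_midpoint_sq (A B C N : P) :
    dist A N ^ 2 - dist (midpoint ℝ A B) N ^ 2 - dist (midpoint ℝ A C) N ^ 2
        + dist (midpoint ℝ B C) N ^ 2 =
      dist B A * dist C A * cos (∠ B A C) / 2 := by
  have hAB := dist_sq_add_dist_sq_eq_two_mul_dist_midpoint_sq_add_half_dist_sq N A B
  have hAC := dist_sq_add_dist_sq_eq_two_mul_dist_midpoint_sq_add_half_dist_sq N A C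
  have hBC := dist_sq_add_dist_sq_eq_two_mul_dist_midpoint_sq_add_half_dist_sq N B C
  have hcos := law_cos B A C
  simp only [dist_comm N] at hAB hAC hBC
  rw [dist_comm A B, dist_comm A C] at *
  linear_combination (hAB + hAC - hBC) / 2 - hcos / 4

end EuclideanGeometry

open EuclideanGeometry

theorem power_of_vertex_wrt_medial_triangle_general (A B C : EuclideanSpace ℝ (Fin 2))
    (N : EuclideanSpace ℝ (Fin 2)) (ρ : ℝ)
    -- `N` is the circumcenter of the medial triangle `DEF` and `ρ` its circumradius
    (hD : dist (midpoint ℝ A B) N = ρ)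
    (hE : dist (midpoint ℝ A C) N = ρ)
    (hF : dist (midpoint ℝ B C) N = ρ) :
    dist A N ^ 2 - ρ ^ 2 =
      dist B A * dist C A * Real.cos (EuclideanGeometry.angle B A C) / 2 ∧
    (dist A N < ρ ↔ Real.pi / 2 < EuclideanGeometry.angle B A C) := by
  have hpower : dist A N ^ 2 - ρ ^ 2 = dist B A * dist C A * cos (∠ B A C) / 2 := by
    rw [← dist_sq_sub_dist_midpoint_sq_sub_dist_midpoint_sq_add_dist_midpoint_sq, hD, hE, hF]
    ring
  refine ⟨hpower, ?_⟩
  have hρ : 0 ≤ ρ := hD ▸ dist_nonneg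
  rw [← dist_mul_dist_mul_cos_angle_neg_iff, ← sq_lt_sq₀ dist_nonneg hρ, ← sub_neg, hpower]
  simp [div_neg_iff]

/-- Let `A, B, C ∈ ℝ²` be affinely independent, let `D, E, F` be the
edge midpoints of `AB`, `AC`, `BC`, and let `N` and `ρ` be the circumcenter and
circumradius of the medial triangle `DEF`. Then
`‖A − N‖² − ρ² = (‖B − A‖·‖C − A‖·cos ∠(B,A,C)) / 2`; consequently `A` lies strictly
inside the closed circumscribed disk of `DEF` iff the angle `∠(B,A,C)` is obtuse. -/
theorem power_of_vertex_wrt_medial_triangle (A B C : EuclideanSpace ℝ (Fin 2))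
    (hai : AffineIndependent ℝ ![A, B, C])
    (N : EuclideanSpace ℝ (Fin 2)) (ρ : ℝ)
    -- `N` is the circumcenter of the medial triangle `DEF` and `ρ` its circumradius
    (hD : dist (midpoint ℝ A B) N = ρ)
    (hE : dist (midpoint ℝ A C) N = ρ)
    (hF : dist (midpoint ℝ B C) N = ρ) :
    dist A N ^ 2 - ρ ^ 2 =
      dist B A * dist C A * Real.cos (EuclideanGeometry.angle B A C) / 2 ∧
    (dist A N < ρ ↔ Real.pi / 2 < EuclideanGeometry.angle B A C) :=
  power_of_vertex_wrt_medial_triangle_general A B C N ρ hD hE hF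
end
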